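/- Let T be a finite index set with positive real weights w, let n ≤ |T|, and let g be a real-valued function on the n-element subsets of T. Define P(T̂) = (∏_{j ∈ T̂} w_j) / e_n(T; w) for each n-element subset T̂ ⊆ T, and F(w) = Σ_{T̂ ⊆ T, |T̂| = n} P(T̂) · g(T̂). Then for each index i ∈ T, the partial derivative of F with respect to the single coordinate w_i (holding the other coordinates fixed) exists and equals Σ_{T̂ ⊆ T, |T̂| = n, i ∈ T̂} (1 / w_i) · P(T̂) · ( g(T̂) − F(w) ). (This is the policy-gradient expression for the multiple-state memory: the gradient of the expected return with respect to the weight w_i, when the memory contents M are distributed as P(M = S_{T̂}) = ∏_{j ∈ T̂} w_j / Σ_{T̃} ∏_{j ∈ T̃} w_j and g(T̂) is the expected return given memory contents S_{T̂}.) -/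

import Mathlib

/-- Weighted elementary symmetric sum: `e_m(S; w) = Σ_{T̂ ⊆ S, |T̂| = m} ∏_{j ∈ T̂} w_j`. -/
noncomputable def esymm {ι : Type*} (S : Finset ι) (w : ι → ℝ) (m : ℕ) : ℝ :=
  ∑ T ∈ S.powersetCard m, ∏ j ∈ T, w j

/-!
The weights `p_a` of a normalized average `F = Σ_a (p_a / Σ_b p_b) g_a` contribute to its
derivative through the score-function identity `F' = Σ_a (p_a' / Σ_b p_b) (g_a - F)`.
With `x = w_i`, the weight `∏_{j ∈ T̂} w_j` of a subset `T̂` is `x ∏_{j ∈ T̂ \ {i}} w_j` when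
`i ∈ T̂` and constant otherwise, so `p_T̂' = p_T̂ / w_i` or `0`.
-/

open Finset

theorem hasDerivAt_weighted_average {𝕜 α : Type*} [NontriviallyNormedField 𝕜]
    {s : Finset α} {p : α → 𝕜 → 𝕜} {p' g : α → 𝕜} {x : 𝕜}
    (hp : ∀ a ∈ s, HasDerivAt (p a) (p' a) x) (hZ : ∑ b ∈ s, p b x ≠ 0) :
    HasDerivAt (fun y => ∑ a ∈ s, (p a y / ∑ b ∈ s, p b y) * g a)
      (∑ a ∈ s, (p' a / ∑ b ∈ s, p b x) *
        (g a - ∑ b ∈ s, (p b x / ∑ c ∈ s, p c x) * g b)) x := by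
  have hfun : (fun y => ∑ a ∈ s, (p a y / ∑ b ∈ s, p b y) * g a) =
      fun y => (∑ a ∈ s, p a y * g a) / ∑ b ∈ s, p b y := by
    ext y
    simp only [sum_div, div_mul_eq_mul_div]
  have hnum : HasDerivAt (fun y => ∑ a ∈ s, p a y * g a) (∑ a ∈ s, p' a * g a) x :=
    HasDerivAt.fun_sum fun a ha => (hp a ha).mul_const (g a)
  have hden : HasDerivAt (fun y => ∑ b ∈ s, p b y) (∑ b ∈ s, p' b) x :=
    HasDerivAt.fun_sum hp
  have hF : ∑ b ∈ s, (p b x / ∑ c ∈ s, p c x) * g b = (∑ a ∈ s, p a x * g a) / ∑ b ∈ s, p b x :=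
    congrFun hfun x
  rw [hfun, hF]
  refine (hnum.div hden hZ).congr_deriv ?_
  simp only [mul_sub, sum_sub_distrib, ← sum_mul, div_mul_eq_mul_div, ← sum_div]
  field_simp

theorem hasDerivAt_prod_update {𝕜 ι : Type*} [NontriviallyNormedField 𝕜] [DecidableEq ι]
    (S : Finset ι) (w : ι → 𝕜) (i : ι) (x : 𝕜) :
    HasDerivAt (fun y => ∏ j ∈ S, Function.update w i y j)
      (if i ∈ S then ∏ j ∈ S \ {i}, w j else 0) x := by
  split_ifs with hiS
  · simp only [prod_update_of_mem hiS]
    simpa using (hasDerivAt_id x).mul_const (∏ j ∈ S \ {i}, w j)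
  · simp only [prod_update_of_notMem hiS]
    exact hasDerivAt_const x _

theorem esymm_pos {ι : Type*} {S : Finset ι} {w : ι → ℝ} (hw : ∀ j ∈ S, 0 < w j) {m : ℕ}
    (hm : m ≤ S.card) : 0 < esymm S w m :=
  sum_pos (fun _ hU => prod_pos fun j hj => hw j ((mem_powersetCard.mp hU).1 hj))
    (powersetCard_nonempty.mpr hm)

theorem hasDerivAt_subset_weighted_average_general {ι : Type*} [DecidableEq ι]
    (T : Finset ι) (w : ι → ℝ) (hw : ∀ j ∈ T, 0 < w j)
    (n : ℕ) (hn : n ≤ T.card) (g : Finset ι → ℝ) (i : ι) :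
    HasDerivAt
      (fun x : ℝ => ∑ That ∈ T.powersetCard n,
        ((∏ j ∈ That, Function.update w i x j) / esymm T (Function.update w i x) n) * g That)
      (∑ That ∈ (T.powersetCard n).filter (fun That => i ∈ That),
        (1 / w i) * ((∏ j ∈ That, w j) / esymm T w n) *
          (g That - ∑ That' ∈ T.powersetCard n, ((∏ j ∈ That', w j) / esymm T w n) * g That'))
      (w i) := by
  have hZ : ∑ S ∈ T.powersetCard n, ∏ j ∈ S, Function.update w i (w i) j ≠ 0 := by
    simpa only [Function.update_eq_self, esymm] using (esymm_pos hw hn).ne'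
  refine (hasDerivAt_weighted_average (g := g)
    (fun S _ => hasDerivAt_prod_update S w i (w i)) hZ).congr_deriv ?_
  simp only [Function.update_eq_self, sum_filter, esymm]
  refine sum_congr rfl fun S hS => ?_
  split_ifs with hiS
  · have hwi : w i ≠ 0 := (hw i ((mem_powersetCard.mp hS).1 hiS)).ne'
    rw [prod_eq_mul_prod_sdiff_singleton_of_mem hiS]
    field_simp
  · rw [zero_div, zero_mul]

/-- Policy-gradient expression for the multiple-state memory.  With
`P(T̂) = (∏_{j ∈ T̂} w_j) / e_n(T; w)` on `n`-element subsets `T̂ ⊆ T` and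
`F(w) = Σ_{T̂} P(T̂) · g(T̂)`, the partial derivative of `F` with respect to the single
coordinate `w_i` (holding the other coordinates fixed) exists and equals
`Σ_{T̂ ∋ i} (1 / w_i) · P(T̂) · (g(T̂) − F(w))`. -/
theorem hasDerivAt_subset_weighted_average {ι : Type*} [DecidableEq ι]
    (T : Finset ι) (w : ι → ℝ) (hw : ∀ j ∈ T, 0 < w j)
    (n : ℕ) (hn : n ≤ T.card) (g : Finset ι → ℝ) (i : ι) (hi : i ∈ T) :
    HasDerivAt
      (fun x : ℝ => ∑ That ∈ T.powersetCard n,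
        ((∏ j ∈ That, Function.update w i x j) / esymm T (Function.update w i x) n) * g That)
      (∑ That ∈ (T.powersetCard n).filter (fun That => i ∈ That),
        (1 / w i) * ((∏ j ∈ That, w j) / esymm T w n) *
          (g That - ∑ That' ∈ T.powersetCard n, ((∏ j ∈ That', w j) / esymm T w n) * g That'))
      (w i) :=
  hasDerivAt_subset_weighted_average_general T w hw n hn g i
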